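/- arXiv:0804.0744 — 3 statements merged into one kernel-verified Lean document; each statement's English description precedes it below -/
import Mathlib

section
/- Let n and m be integers with 0 < n < m and let t ∈ (0, π/2]. Then n·sin²(t/n) ≥ m·sin²(t/m), and equality holds if and only if n = 1, m = 2 and t = π/2. -/
open Real

/-! Since `a sin²(t/a) = t (1 - cos s) / s` with `s = 2t/a`, the strict inequality for `2 ≤ n`
says that the slope of the secant of `1 - cos` from `0` increases on `(0, π/2]`, which holds
because `cos` is strictly concave there. The case `n = 1` then reduces to `m = 2` and the identity
`sin² t - 2 sin²(t/2) = cos t (1 - cos t)`, which vanishes on `(0, π/2]` only at `t = π/2`. -/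

theorem one_sub_cos_div_lt_one_sub_cos_div {x y : ℝ} (hx : 0 < x) (hxy : x < y) (hy : y ≤ π / 2) :
    (1 - cos x) / x < (1 - cos y) / y := by
  have hpi := pi_pos
  have hsecant := strictConcaveOn_cos_Icc.secant_strict_mono (a := 0)
    ⟨by linarith, by linarith⟩ ⟨by linarith, by linarith⟩ ⟨by linarith, hy⟩
    hx.ne' (hx.trans hxy).ne' hxy
  simp only [cos_zero, sub_zero] at hsecant
  rw [← neg_sub 1 (cos x), ← neg_sub 1 (cos y), neg_div, neg_div] at hsecant
  linarith

theorem mul_sin_sq_div_lt_mul_sin_sq_div {a b t : ℝ} (ha : 0 < a) (hab : a < b) (ht : 0 < t)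
    (hta : t / a ≤ π / 4) : b * sin (t / b) ^ 2 < a * sin (t / a) ^ 2 := by
  have hb : 0 < b := ha.trans hab
  have hslope : ∀ c, 0 < c → c * sin (t / c) ^ 2 = t * ((1 - cos (2 * t / c)) / (2 * t / c)) := by
    intro c hc
    rw [sin_sq_eq_half_sub, mul_div_assoc]
    field_simp
  rw [hslope a ha, hslope b hb]
  refine mul_lt_mul_of_pos_left (one_sub_cos_div_lt_one_sub_cos_div (by positivity) ?_ ?_) ht
  · exact div_lt_div_of_pos_left (by positivity) ha hab
  · rw [mul_div_assoc]
    linarith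

theorem sin_sq_sub_two_mul_sin_sq_half (t : ℝ) :
    sin t ^ 2 - 2 * sin (t / 2) ^ 2 = cos t * (1 - cos t) := by
  rw [sin_sq, sin_sq_eq_half_sub, mul_div_cancel₀ t two_ne_zero]
  ring

theorem two_mul_sin_sq_half_le_sin_sq {t : ℝ} (ht₀ : -(π / 2) ≤ t) (ht₁ : t ≤ π / 2) :
    2 * sin (t / 2) ^ 2 ≤ sin t ^ 2 := by
  have hcos : 0 ≤ cos t := cos_nonneg_of_mem_Icc ⟨ht₀, ht₁⟩
  nlinarith [sin_sq_sub_two_mul_sin_sq_half t, cos_le_one t]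

theorem sin_sq_eq_two_mul_sin_sq_half_iff {t : ℝ} (ht₀ : 0 < t) (ht₁ : t ≤ π / 2) :
    sin t ^ 2 = 2 * sin (t / 2) ^ 2 ↔ t = π / 2 := by
  have hpi := pi_pos
  have hcos_lt_one : cos t < 1 := by
    simpa using cos_lt_cos_of_nonneg_of_le_pi_div_two le_rfl ht₁ ht₀
  rw [← sub_eq_zero, sin_sq_sub_two_mul_sin_sq_half, mul_eq_zero, sub_eq_zero,
    or_iff_left hcos_lt_one.ne']
  refine ⟨fun hcos => ?_, fun h => h ▸ cos_pi_div_two⟩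
  by_contra hne
  exact (cos_pos_of_mem_Ioo ⟨by linarith, lt_of_le_of_ne ht₁ hne⟩).ne' hcos

/-- Let `n` and `m` be integers with `0 < n < m` and let `t ∈ (0, π/2]`. Then
`n·sin²(t/n) ≥ m·sin²(t/m)`, with equality if and only if `n = 1`, `m = 2` and `t = π/2`. -/
theorem stmt0 (n m : ℤ) (hn : 0 < n) (hnm : n < m) (t : ℝ) (ht : t ∈ Set.Ioc 0 (π / 2)) :
    (m : ℝ) * sin (t / (m : ℝ)) ^ 2 ≤ (n : ℝ) * sin (t / (n : ℝ)) ^ 2 ∧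
      ((n : ℝ) * sin (t / (n : ℝ)) ^ 2 = (m : ℝ) * sin (t / (m : ℝ)) ^ 2 ↔
        n = 1 ∧ m = 2 ∧ t = π / 2) := by
  obtain ⟨ht₀, ht₁⟩ := ht
  have hpi := pi_pos
  have hquarter : ∀ a : ℝ, 2 ≤ a → t / a ≤ π / 4 := fun a ha => by
    rw [div_le_iff₀ (by linarith)]
    nlinarith
  rcases (by omega : 2 ≤ n ∨ n = 1) with hn₂ | rfl
  · have hlt := mul_sin_sq_div_lt_mul_sin_sq_div (by positivity) (Int.cast_lt.mpr hnm) ht₀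
      (hquarter n (by exact_mod_cast hn₂))
    exact ⟨hlt.le, fun h => absurd h hlt.ne', fun h => by omega⟩
  simp only [Int.cast_one, one_mul, div_one, true_and]
  rcases (by omega : m = 2 ∨ 3 ≤ m) with rfl | hm₃
  · push_cast
    exact ⟨two_mul_sin_sq_half_le_sin_sq (by linarith) ht₁,
      by simpa using sin_sq_eq_two_mul_sin_sq_half_iff ht₀ ht₁⟩
  · have hlt := (mul_sin_sq_div_lt_mul_sin_sq_div two_pos (b := (m : ℝ))
      (by exact_mod_cast hm₃) ht₀ (hquarter 2 le_rfl)).trans_le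
      (two_mul_sin_sq_half_le_sin_sq (by linarith) ht₁)
    exact ⟨hlt.le, fun h => absurd h hlt.ne', fun h => by omega⟩
end

section
/- Let m ≥ 2 be an integer, let θ be a real number with (m−1)π/2 ≤ θ < mπ/2, and let r be a real number with r ≥ tan(θ/m) (in particular r > 0). Then for all nonnegative real numbers x_1, …, x_m satisfying Σ_{i=1}^m arctan(r·x_i) = θ, one has Σ_{i=1}^m (1 − x_i²)/(1 + r²·x_i²) ≥ (m/r²)·((1 + r²)·cos²(θ/m) − 1). -/
/-!
The constraint forces `r > 0`, as the arctangents sum to `θ > 0`. With `φᵢ = arctan (r xᵢ)` and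
`cos² φᵢ = 1 / (1 + r² xᵢ²)`, each summand is `((1 + r²) cos² φᵢ - 1) / r²`, so it suffices to show
`m cos² (θ/m) ≤ Σ cos² φᵢ`. For `wᵢ = π/2 - φᵢ ≥ 0`, whose sum is `mπ/2 - θ ≤ π/2`, this says that
`Σ sin² wᵢ` is smallest when all `wᵢ` are equal. That follows by smoothing: replacing a pair
`x ≤ c ≤ y` (with `c` the mean) by `c, x + y - c` keeps the sum and does not increase
`sin² x + sin² y`, because `sin² a + sin² b = 1 - cos (a + b) cos (a - b)` and `cos (x + y) ≥ 0`.
Every step fixes one more entry at the mean.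
-/

open Real

namespace Multiset

variable {α : Type*} [AddCommMonoid α] [LinearOrder α] [IsOrderedCancelAddMonoid α]

theorem exists_le_of_sum_le_card_nsmul {t : Multiset α} {c : α} (ht : t ≠ 0)
    (h : t.sum ≤ card t • c) : ∃ a ∈ t, a ≤ c := by
  by_contra! hlt
  have := sum_lt_sum_of_nonempty ht (f := fun _ ↦ c) (g := id) hlt
  simp only [map_const', sum_replicate, map_id] at this
  exact this.not_ge h

theorem exists_ge_of_card_nsmul_le_sum {t : Multiset α} {c : α} (ht : t ≠ 0)
    (h : card t • c ≤ t.sum) : ∃ a ∈ t, c ≤ a :=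
  exists_le_of_sum_le_card_nsmul (α := αᵒᵈ) ht h

theorem card_mul_le_sum_map_of_smoothing {f : ℝ → ℝ} {L c : ℝ}
    (hf : ∀ x y, 0 ≤ x → x ≤ c → c ≤ y → x + y ≤ L → f c + f (x + y - c) ≤ f x + f y)
    (t : Multiset ℝ) (ht : ∀ a ∈ t, 0 ≤ a) (hsum : t.sum = card t * c) (hL : t.sum ≤ L) :
    card t * f c ≤ (t.map f).sum := by
  induction hn : card t generalizing t with
  | zero => simp_all
  | succ n ih =>
    obtain ⟨j, hj, hcj⟩ := exists_ge_of_card_nsmul_le_sum (card_pos.mp (by rw [hn]; omega))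
      (by rw [nsmul_eq_mul, hsum])
    obtain ⟨t₁, rfl⟩ := exists_cons_of_mem hj
    rcases eq_or_ne t₁ 0 with rfl | ht₁
    · simp_all
    simp only [sum_cons, card_cons, Nat.cast_add, Nat.cast_one, map_cons] at hn hsum hL ⊢
    obtain ⟨i, hi, hic⟩ := exists_le_of_sum_le_card_nsmul (c := c) ht₁
      (by rw [nsmul_eq_mul]; linarith)
    obtain ⟨t₂, rfl⟩ := exists_cons_of_mem hi
    simp only [sum_cons, card_cons, Nat.cast_add, Nat.cast_one, map_cons, mem_cons,
      forall_eq_or_imp] at hn hsum hL ht ⊢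
    obtain ⟨-, hi0, ht₂⟩ := ht
    have ht₂0 : 0 ≤ t₂.sum := sum_nonneg ht₂
    have hpair := hf i j hi0 hic hcj (by linarith)
    -- replace `j, i` by `c, i + j - c`: one entry fewer, same mean `c`
    have hIH := ih ((i + j - c) ::ₘ t₂) (forall_mem_cons.mpr ⟨by linarith, ht₂⟩)
      (by simp only [sum_cons, card_cons, Nat.cast_add, Nat.cast_one]; linarith)
      (by simp only [sum_cons]; linarith) (by simp only [card_cons]; omega)
    simp only [map_cons, sum_cons] at hIH
    linarith

end Multiset

theorem sin_sq_add_sin_sq (a b : ℝ) : sin a ^ 2 + sin b ^ 2 = 1 - cos (a + b) * cos (a - b) := by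
  rw [cos_add, cos_sub]
  nlinarith [sin_sq_add_cos_sq a, sin_sq_add_cos_sq b]

theorem sin_sq_smoothing {x y c : ℝ} (hx : 0 ≤ x) (hxc : x ≤ c) (hcy : c ≤ y)
    (hxy : x + y ≤ π / 2) :
    sin c ^ 2 + sin (x + y - c) ^ 2 ≤ sin x ^ 2 + sin y ^ 2 := by
  have hdiff : cos (x - y) - cos (c - (x + y - c)) = -2 * sin (y - c) * sin (c - x) := by
    rw [cos_sub_cos, show (x - y + (c - (x + y - c))) / 2 = -(y - c) by ring,
      show (x - y - (c - (x + y - c))) / 2 = -(c - x) by ring, sin_neg, sin_neg]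
    ring
  have h₁ : 0 ≤ cos (x + y) := cos_nonneg_of_mem_Icc ⟨by linarith [pi_pos], hxy⟩
  have h₂ : 0 ≤ sin (y - c) := sin_nonneg_of_nonneg_of_le_pi (by linarith) (by linarith [pi_pos])
  have h₃ : 0 ≤ sin (c - x) := sin_nonneg_of_nonneg_of_le_pi (by linarith) (by linarith [pi_pos])
  rw [sin_sq_add_sin_sq, sin_sq_add_sin_sq, add_sub_cancel]
  nlinarith [mul_nonneg (mul_nonneg h₁ h₂) h₃]

theorem card_mul_sin_sq_le_sum {ι : Type*} (s : Finset ι) {w : ι → ℝ} {c : ℝ}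
    (hw : ∀ i ∈ s, 0 ≤ w i) (hsum : ∑ i ∈ s, w i = s.card * c) (hle : ∑ i ∈ s, w i ≤ π / 2) :
    s.card * sin c ^ 2 ≤ ∑ i ∈ s, sin (w i) ^ 2 := by
  rw [Finset.sum_eq_multiset_sum] at hsum hle ⊢
  have := Multiset.card_mul_le_sum_map_of_smoothing (f := fun x ↦ sin x ^ 2)
    (fun _ _ hx hxc hcy hxy ↦ sin_sq_smoothing hx hxc hcy hxy) (s.val.map w)
    (by simpa using hw) (by simpa using hsum) hle
  simpa [Multiset.map_map] using this

theorem one_sub_sq_div_one_add_sq_eq {r : ℝ} (hr : r ≠ 0) (x : ℝ) :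
    (1 - x ^ 2) / (1 + r ^ 2 * x ^ 2) = ((1 + r ^ 2) * cos (arctan (r * x)) ^ 2 - 1) / r ^ 2 := by
  rw [cos_sq_arctan]
  have : 0 < 1 + (r * x) ^ 2 := by positivity
  field_simp
  ring

theorem stmt9_general (m : ℕ) (hm : 2 ≤ m) (θ : ℝ)
    (hθ1 : ((m : ℝ) - 1) * π / 2 ≤ θ)
    (r : ℝ) :
    ∀ x : Fin m → ℝ, (∀ i, 0 ≤ x i) → ∑ i, arctan (r * x i) = θ →
      ((m : ℝ) / r ^ 2) * ((1 + r ^ 2) * cos (θ / m) ^ 2 - 1) ≤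
        ∑ i, (1 - x i ^ 2) / (1 + r ^ 2 * x i ^ 2) := by
  intro x hx hsum
  have hm' : (2 : ℝ) ≤ m := by exact_mod_cast hm
  have hθ : 0 < θ := by nlinarith [pi_pos]
  have hr : 0 < r := by
    by_contra! hr
    have : ∑ i, arctan (r * x i) ≤ 0 :=
      Finset.sum_nonpos fun i _ ↦ arctan_le_zero.mpr (mul_nonpos_of_nonpos_of_nonneg hr (hx i))
    linarith
  have hcos : (m : ℝ) * cos (θ / m) ^ 2 ≤ ∑ i, cos (arctan (r * x i)) ^ 2 := by
    have hw : ∑ i, (π / 2 - arctan (r * x i)) = m * (π / 2 - θ / m) := by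
      simp only [Finset.sum_sub_distrib, hsum, Finset.sum_const, Finset.card_univ,
        Fintype.card_fin, nsmul_eq_mul]
      field_simp
    have := card_mul_sin_sq_le_sum Finset.univ
      (fun i _ ↦ sub_nonneg.mpr (arctan_lt_pi_div_two (r * x i)).le) (by simpa using hw)
      (by rw [hw]; field_simp; nlinarith)
    simpa only [Finset.card_univ, Fintype.card_fin, sin_pi_div_two_sub] using this
  simp_rw [one_sub_sq_div_one_add_sq_eq hr.ne', ← Finset.sum_div, Finset.sum_sub_distrib,
    ← Finset.mul_sum, div_mul_eq_mul_div]
  gcongr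
  simp only [Finset.sum_const, Finset.card_univ, Fintype.card_fin, nsmul_eq_mul, mul_one]
  nlinarith

/-- Let `m ≥ 2`, let `(m−1)π/2 ≤ θ < mπ/2`, and let `r ≥ tan(θ/m)`. Then for all
`x_1, …, x_m ≥ 0` with `Σ arctan(r·x_i) = θ`, one has
`Σ (1 − x_i²)/(1 + r²x_i²) ≥ (m/r²)·((1 + r²)·cos²(θ/m) − 1)`. -/
theorem stmt9 (m : ℕ) (hm : 2 ≤ m) (θ : ℝ)
    (hθ1 : ((m : ℝ) - 1) * π / 2 ≤ θ) (hθ2 : θ < (m : ℝ) * π / 2)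
    (r : ℝ) (hr : tan (θ / m) ≤ r) :
    ∀ x : Fin m → ℝ, (∀ i, 0 ≤ x i) → ∑ i, arctan (r * x i) = θ →
      ((m : ℝ) / r ^ 2) * ((1 + r ^ 2) * cos (θ / m) ^ 2 - 1) ≤
        ∑ i, (1 - x i ^ 2) / (1 + r ^ 2 * x i ^ 2) :=
  stmt9_general m hm θ hθ1 r
end

section
/- (Geometric maximum principle, matrix form) Let A and A' be n×n real symmetric positive definite matrices with A ≤ A', i.e. A' − A is positive semidefinite. Let θ ∈ (0, nπ/2) and let r, r' > 0 be real numbers satisfying Σ_{i=1}^n arctan(r·λ_i(A)) = θ and Σ_{i=1}^n arctan(r'·λ_i(A')) = θ. Then r ≥ r'. -/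
/-!
By the Courant–Fischer argument, `A ≤ A'` forces the `k`-th largest eigenvalue of `A` to be at
most the `k`-th largest eigenvalue of `A'`. Since `arctan` is increasing, the function
`s ↦ Σ arctan (s λ_i)` is then pointwise smaller for `A` than for `A'`, and strictly increasing
in `s` because the eigenvalues are positive. If `r < r'`, evaluating at `r` and `r'` gives
`θ ≤ Σ arctan (r λ_i(A')) < Σ arctan (r' λ_i(A')) = θ`.
-/

open Module Real

theorem Submodule.exists_ne_zero_mem_inf_of_finrank_add_gt {K V : Type*} [DivisionRing K]
    [AddCommGroup V] [Module K V] [FiniteDimensional K V] {W W' : Submodule K V}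
    (h : finrank K V < finrank K W + finrank K W') : ∃ x ∈ W ⊓ W', x ≠ 0 := by
  have hsum := Submodule.finrank_sup_add_finrank_inf_eq W W'
  have hsup := Submodule.finrank_le (W ⊔ W')
  have hpos : 0 < finrank K ↥(W ⊓ W') := by omega
  obtain ⟨x, hx⟩ := finrank_pos_iff_exists_ne_zero.mp hpos
  exact ⟨x, x.2, by simpa using hx⟩

namespace OrthonormalBasis

variable {ι 𝕜 E : Type*} [Fintype ι] [RCLike 𝕜] [NormedAddCommGroup E] [InnerProductSpace 𝕜 E]

theorem inner_eq_zero_of_mem_span_image (b : OrthonormalBasis ι 𝕜 E) {s : Set ι} {x : E}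
    (hx : x ∈ Submodule.span 𝕜 (b '' s)) {i : ι} (hi : i ∉ s) : inner 𝕜 (b i) x = 0 := by
  rw [← b.coe_toBasis, Basis.mem_span_image] at hx
  rw [← b.repr_apply_apply, ← b.coe_toBasis_repr_apply]
  exact Finsupp.notMem_support_iff.mp fun h => hi (hx h)

theorem finrank_span_image (b : OrthonormalBasis ι 𝕜 E) (s : Finset ι) :
    finrank 𝕜 (Submodule.span 𝕜 (b '' s)) = s.card := by
  rw [Set.image_eq_range]
  exact (finrank_span_eq_card (b.orthonormal.linearIndependent.comp _ Subtype.val_injective)).trans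
    (Fintype.card_coe s)

end OrthonormalBasis

namespace LinearMap.IsSymmetric

variable {𝕜 E : Type*} [RCLike 𝕜] [NormedAddCommGroup E] [InnerProductSpace 𝕜 E]
  [FiniteDimensional 𝕜 E] {n : ℕ} {T : E →ₗ[𝕜] E} (hT : T.IsSymmetric) (hn : finrank 𝕜 E = n)

theorem re_inner_apply_self_eq_sum (x : E) :
    RCLike.re (inner 𝕜 (T x) x) =
      ∑ i, hT.eigenvalues hn i * ‖inner 𝕜 (hT.eigenvectorBasis hn i) x‖ ^ 2 := by
  set v := hT.eigenvectorBasis hn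
  have hcoord : ∀ i, inner 𝕜 (T x) (v i) = hT.eigenvalues hn i * inner 𝕜 x (v i) := by
    intro i
    rw [hT x, apply_eigenvectorBasis, inner_smul_right]
  rw [← v.sum_inner_mul_inner, map_sum]
  refine Finset.sum_congr rfl fun i _ => ?_
  rw [hcoord, mul_assoc, ← inner_conj_symm x, RCLike.conj_mul, ← RCLike.ofReal_pow,
    ← RCLike.ofReal_mul, RCLike.ofReal_re]

theorem mul_norm_sq_le_re_inner_apply_self {s : Set (Fin n)} {c : ℝ}
    (hc : ∀ i ∈ s, c ≤ hT.eigenvalues hn i) {x : E}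
    (hx : x ∈ Submodule.span 𝕜 (hT.eigenvectorBasis hn '' s)) :
    c * ‖x‖ ^ 2 ≤ RCLike.re (inner 𝕜 (T x) x) := by
  rw [hT.re_inner_apply_self_eq_sum hn, ← (hT.eigenvectorBasis hn).sum_sq_norm_inner_right,
    Finset.mul_sum]
  refine Finset.sum_le_sum fun i _ => ?_
  by_cases hi : i ∈ s
  · exact mul_le_mul_of_nonneg_right (hc i hi) (sq_nonneg _)
  · simp [OrthonormalBasis.inner_eq_zero_of_mem_span_image _ hx hi]

theorem re_inner_apply_self_le_mul_norm_sq {s : Set (Fin n)} {c : ℝ}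
    (hc : ∀ i ∈ s, hT.eigenvalues hn i ≤ c) {x : E}
    (hx : x ∈ Submodule.span 𝕜 (hT.eigenvectorBasis hn '' s)) :
    RCLike.re (inner 𝕜 (T x) x) ≤ c * ‖x‖ ^ 2 := by
  rw [hT.re_inner_apply_self_eq_sum hn, ← (hT.eigenvectorBasis hn).sum_sq_norm_inner_right,
    Finset.mul_sum]
  refine Finset.sum_le_sum fun i _ => ?_
  by_cases hi : i ∈ s
  · exact mul_le_mul_of_nonneg_right (hc i hi) (sq_nonneg _)
  · simp [OrthonormalBasis.inner_eq_zero_of_mem_span_image _ hx hi]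

theorem eigenvalues_le_of_le {T' : E →ₗ[𝕜] E} (hT' : T'.IsSymmetric) (hle : T ≤ T')
    (k : Fin n) : hT.eigenvalues hn k ≤ hT'.eigenvalues hn k := by
  -- Courant–Fischer: eigenvectors of `T` for indices `≤ k` and of `T'` for indices `≥ k`
  -- span subspaces of dimensions `k + 1` and `n - k`, which must meet.
  set W := Submodule.span 𝕜 (hT.eigenvectorBasis hn '' ↑(Finset.Iic k))
  set W' := Submodule.span 𝕜 (hT'.eigenvectorBasis hn '' ↑(Finset.Ici k))
  have hdim : finrank 𝕜 E < finrank 𝕜 W + finrank 𝕜 W' := by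
    simp only [W, W', OrthonormalBasis.finrank_span_image, Fin.card_Iic, Fin.card_Ici]
    omega
  obtain ⟨x, ⟨hxW, hxW'⟩, hx⟩ := Submodule.exists_ne_zero_mem_inf_of_finrank_add_gt hdim
  have hlow := hT.mul_norm_sq_le_re_inner_apply_self hn
    (fun i hi => hT.eigenvalues_antitone hn (Finset.mem_Iic.mp hi)) hxW
  have hhigh := hT'.re_inner_apply_self_le_mul_norm_sq hn
    (fun i hi => hT'.eigenvalues_antitone hn (Finset.mem_Ici.mp hi)) hxW'
  have hmid : RCLike.re (inner 𝕜 (T x) x) ≤ RCLike.re (inner 𝕜 (T' x) x) := by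
    have := ((LinearMap.le_def T T').mp hle).re_inner_nonneg_left x
    rwa [sub_apply, inner_sub_left, map_sub, sub_nonneg] at this
  exact le_of_mul_le_mul_right (hlow.trans (hmid.trans hhigh)) (by positivity)

end LinearMap.IsSymmetric

namespace Matrix.IsHermitian

open scoped ComplexOrder

variable {𝕜 ι : Type*} [RCLike 𝕜] [Fintype ι] [DecidableEq ι] {A B : Matrix ι ι 𝕜}

theorem eigenvalues₀_le_of_posSemidef_sub (hA : A.IsHermitian) (hB : B.IsHermitian)
    (hle : (B - A).PosSemidef) (k : Fin (Fintype.card ι)) :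
    hA.eigenvalues₀ k ≤ hB.eigenvalues₀ k :=
  (isSymmetric_toEuclideanLin_iff.mpr hA).eigenvalues_le_of_le _
    (isSymmetric_toEuclideanLin_iff.mpr hB)
    (by rwa [LinearMap.le_def, ← map_sub, isPositive_toEuclideanLin_iff]) k

/-- `eigenvalues` is the decreasingly sorted `eigenvalues₀` reindexed along an arbitrary
equivalence, so comparisons between two matrices have to go through `eigenvalues₀`. -/
theorem sum_comp_eigenvalues {M : Type*} [AddCommMonoid M] (hA : A.IsHermitian) (f : ℝ → M) :
    ∑ i, f (hA.eigenvalues i) = ∑ k, f (hA.eigenvalues₀ k) :=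
  Equiv.sum_comp (Fintype.equivOfCardEq (Fintype.card_fin _)).symm (f ∘ hA.eigenvalues₀)

end Matrix.IsHermitian

theorem sum_arctan_mul_lt_sum_arctan_mul {ι : Type*} [Fintype ι] [Nonempty ι] {μ : ι → ℝ}
    (hμ : ∀ i, 0 < μ i) {r r' : ℝ} (hr : r < r') :
    ∑ i, arctan (r * μ i) < ∑ i, arctan (r' * μ i) :=
  Finset.sum_lt_sum_of_nonempty Finset.univ_nonempty fun i _ =>
    arctan_strictMono (mul_lt_mul_of_pos_right hr (hμ i))

theorem stmt11_general (n : ℕ) (A A' : Matrix (Fin n) (Fin n) ℝ)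
    (hA : A.PosDef) (hA' : A'.PosDef) (hle : (A' - A).PosSemidef)
    (θ : ℝ) (hθ : θ ∈ Set.Ioo 0 ((n : ℝ) * π / 2))
    (r r' : ℝ) (hr0 : 0 < r)
    (hr : ∑ i, arctan (r * hA.1.eigenvalues i) = θ)
    (hr' : ∑ i, arctan (r' * hA'.1.eigenvalues i) = θ) :
    r' ≤ r := by
  have : Nonempty (Fin n) :=
    Finset.univ_nonempty_iff.mp (Finset.nonempty_of_sum_ne_zero (hr.trans_ne hθ.1.ne'))
  by_contra! hlt
  have hmono : ∀ k, arctan (r * hA.1.eigenvalues₀ k) ≤ arctan (r * hA'.1.eigenvalues₀ k) :=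
    fun k => arctan_strictMono.monotone
      (mul_le_mul_of_nonneg_left (hA.1.eigenvalues₀_le_of_posSemidef_sub hA'.1 hle k) hr0.le)
  refine lt_irrefl θ ?_
  calc
    θ = ∑ k, arctan (r * hA.1.eigenvalues₀ k) :=
        hr.symm.trans (hA.1.sum_comp_eigenvalues fun t => arctan (r * t))
    _ ≤ ∑ k, arctan (r * hA'.1.eigenvalues₀ k) := Finset.sum_le_sum fun k _ => hmono k
    _ = ∑ i, arctan (r * hA'.1.eigenvalues i) :=
        (hA'.1.sum_comp_eigenvalues fun t => arctan (r * t)).symm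
    _ < ∑ i, arctan (r' * hA'.1.eigenvalues i) :=
        sum_arctan_mul_lt_sum_arctan_mul hA'.eigenvalues_pos hlt
    _ = θ := hr'

/-- Geometric maximum principle, matrix form: let `A ≤ A'` be `n×n` real symmetric
positive definite matrices, let `θ ∈ (0, nπ/2)`, and let `r, r' > 0` satisfy
`Σ arctan(r·λ_i(A)) = θ` and `Σ arctan(r'·λ_i(A')) = θ`. Then `r ≥ r'`. -/
theorem stmt11 (n : ℕ) (A A' : Matrix (Fin n) (Fin n) ℝ)
    (hA : A.PosDef) (hA' : A'.PosDef) (hle : (A' - A).PosSemidef)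
    (θ : ℝ) (hθ : θ ∈ Set.Ioo 0 ((n : ℝ) * π / 2))
    (r r' : ℝ) (hr0 : 0 < r) (hr'0 : 0 < r')
    (hr : ∑ i, arctan (r * hA.1.eigenvalues i) = θ)
    (hr' : ∑ i, arctan (r' * hA'.1.eigenvalues i) = θ) :
    r' ≤ r :=
  stmt11_general n A A' hA hA' hle θ hθ r r' hr0 hr hr'
end
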